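/- arXiv:2410.20370 — 2 statements merged into one kernel-verified Lean document; each statement's English description precedes it below -/
import Mathlib

section
/- Let S ⊂ ℝⁿ₊ be a compact convex lower set with 0 ∈ S. Then H_S is Lipschitz continuous on ℂⁿ with Lipschitz constant σ_S = φ_S(1,…,1); that is, |H_S(z) − H_S(w)| ≤ σ_S |z − w| for all z, w ∈ ℂⁿ, where |·| is the Euclidean norm on ℂⁿ. Moreover, for such S one has H_S(z) = φ_S(log⁺|z₁|, …, log⁺|zₙ|) for all z ∈ ℂⁿ, where log⁺ t = max(log t, 0). -/
open MeasureTheory Filter Topology Set Pointwise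
open scoped ENNReal NNReal Classical

noncomputable section

/-- The positive orthant `ℝⁿ₊ = [0,∞)ⁿ`. -/
def posOrthant (n : ℕ) : Set (Fin n → ℝ) := {x | ∀ i, 0 ≤ x i}

/-- The supporting function `φ_S(ξ) = sup_{x ∈ S} ⟨x, ξ⟩` of a set `S ⊆ ℝⁿ`. -/
def suppFn {n : ℕ} (S : Set (Fin n → ℝ)) (ξ : Fin n → ℝ) : ℝ :=
  sSup ((fun x => ∑ i, x i * ξ i) '' S)

/-- `σ_S = φ_S(1,…,1)`. -/
def sigmaS {n : ℕ} (S : Set (Fin n → ℝ)) : ℝ := suppFn S 1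

/-- `ℂ*ⁿ = (ℂ ∖ {0})ⁿ`. -/
def torusComp (n : ℕ) : Set (Fin n → ℂ) := {z | ∀ i, z i ≠ 0}

/-- The logarithmic supporting function `H_S`:
`H_S(z) = φ_S(log|z₁|,…,log|zₙ|)` on `ℂ*ⁿ`, and the limsup over `ℂ*ⁿ ∋ w → z` elsewhere. -/
def HS {n : ℕ} (S : Set (Fin n → ℝ)) (z : Fin n → ℂ) : ℝ :=
  if z ∈ torusComp n then suppFn S (fun i => Real.log (‖z i‖))
  else Filter.limsup (fun w => suppFn S (fun i => Real.log (‖w i‖))) (𝓝[torusComp n] z)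

/-- The positive part of an extended real number, as an element of `ℝ≥0∞`. -/
def erealPos (x : EReal) : ℝ≥0∞ := if x = ⊤ then ⊤ else ENNReal.ofReal x.toReal

/-- The circle integral `∫₀^{2π} u(a + r e^{iθ} b) dθ` for an `EReal`-valued `u`,
defined as the (upper) integral of the positive part minus that of the negative part. -/
def circInt {n : ℕ} (u : (Fin n → ℂ) → EReal) (a b : Fin n → ℂ) (r : ℝ) : EReal :=
  ((∫⁻ θ in Set.Ioc (0 : ℝ) (2 * Real.pi),
      erealPos (u (a + ((r : ℂ) * Complex.exp ((θ : ℂ) * Complex.I)) • b))) : EReal) -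
  ((∫⁻ θ in Set.Ioc (0 : ℝ) (2 * Real.pi),
      erealPos (-u (a + ((r : ℂ) * Complex.exp ((θ : ℂ) * Complex.I)) • b))) : EReal)

/-- `u : Ω → [−∞,∞)` is plurisubharmonic on an open `Ω ⊆ ℂⁿ`: upper semicontinuous on `Ω`,
`< +∞` on `Ω`, not identically `−∞` on any connected component of `Ω`, and satisfying the
submean inequality `2π · u(a) ≤ ∫₀^{2π} u(a + r e^{iθ} b) dθ` over closed discs
`{a + ζ b : |ζ| ≤ r} ⊆ Ω` in complex lines. -/
def PshOn {n : ℕ} (Ω : Set (Fin n → ℂ)) (u : (Fin n → ℂ) → EReal) : Prop :=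
  UpperSemicontinuousOn u Ω ∧
  (∀ z ∈ Ω, u z ≠ ⊤) ∧
  (∀ z ∈ Ω, ∃ w ∈ connectedComponentIn Ω z, u w ≠ ⊥) ∧
  ∀ a b : Fin n → ℂ, ∀ r : ℝ, 0 < r →
    (∀ ζ : ℂ, ‖ζ‖ ≤ r → a + ζ • b ∈ Ω) →
    ((2 * Real.pi : ℝ) : EReal) * u a ≤ circInt u a b r

/-- The Lelong class `L^S(ℂⁿ)`: plurisubharmonic functions on `ℂⁿ` with `u ≤ H_S + c_u`. -/
def LelongClass {n : ℕ} (S : Set (Fin n → ℝ)) (u : (Fin n → ℂ) → EReal) : Prop :=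
  PshOn Set.univ u ∧ ∃ c : ℝ, ∀ z, u z ≤ ((HS S z + c : ℝ) : EReal)

/-- The Euclidean norm on `ℂⁿ`. -/
def eucNorm {n : ℕ} (z : Fin n → ℂ) : ℝ := Real.sqrt (∑ i, ‖z i‖ ^ 2)

/-- A distance function on `ℂⁿ`: continuous, vanishing exactly at `0`, and absolutely
homogeneous with respect to complex scalars. -/
def IsDistFn {n : ℕ} (μ : (Fin n → ℂ) → ℝ) : Prop :=
  Continuous μ ∧ (∀ z, 0 ≤ μ z) ∧ (∀ z, μ z = 0 ↔ z = 0) ∧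
    ∀ (t : ℂ) (z : Fin n → ℂ), μ (t • z) = ‖t‖ * μ z

/-- `r_μ = inf_{|z| = 1} μ(z)` (Euclidean unit sphere). -/
def rMu {n : ℕ} (μ : (Fin n → ℂ) → ℝ) : ℝ := sInf (μ '' {z | eucNorm z = 1})

/-- `S` is a lower set: `x ∈ S` implies `[0,x₁] × ⋯ × [0,xₙ] ⊆ S`. -/
def IsLowerIn {n : ℕ} (S : Set (Fin n → ℝ)) : Prop :=
  ∀ x ∈ S, ∀ y : Fin n → ℝ, (∀ i, 0 ≤ y i ∧ y i ≤ x i) → y ∈ S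

/-- The standard simplex `Σ = ch{0, e₁, …, eₙ}`. -/
def stdSimpl (n : ℕ) : Set (Fin n → ℝ) :=
  convexHull ℝ (insert 0 (Set.range fun i => Pi.single i 1))

/-!
On `ℂ*ⁿ` the vector `log|zᵢ|` may be replaced by its positive part `log⁺|zᵢ|` without changing
`φ_S`, because `S` is a lower set in the orthant: the points of `S` can drop the coordinates
where `ξᵢ < 0`. The function `z ↦ φ_S(log⁺|z₁|, …, log⁺|zₙ|)` is `σ_S`-Lipschitz since `log⁺` is
`1`-Lipschitz on `[0, ∞)` and `φ_S(ξ + c·1) ≤ φ_S(ξ) + c σ_S` for `c ≥ 0`. Being continuous and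
agreeing with `H_S` on the dense set `ℂ*ⁿ`, it equals the limsup defining `H_S` off `ℂ*ⁿ`.
-/

open scoped Real

namespace Real

lemma log_sub_log_le_sub {a b : ℝ} (hb : 1 ≤ b) (hba : b ≤ a) : log a - log b ≤ a - b := by
  have hb0 : 0 < b := one_pos.trans_le hb
  have ha0 : 0 < a := hb0.trans_le hba
  calc log a - log b = log (a / b) := (log_div ha0.ne' hb0.ne').symm
    _ ≤ a / b - 1 := log_le_sub_one_of_pos (div_pos ha0 hb0)
    _ = (a - b) / b := by field_simp
    _ ≤ a - b := div_le_self (sub_nonneg.mpr hba) hb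

lemma abs_log_sub_log_le_abs_sub {a b : ℝ} (ha : 1 ≤ a) (hb : 1 ≤ b) :
    |log a - log b| ≤ |a - b| := by
  rcases le_total b a with hba | hab
  · rw [abs_of_nonneg (sub_nonneg.mpr (log_le_log (by linarith) hba)),
      abs_of_nonneg (sub_nonneg.mpr hba)]
    exact log_sub_log_le_sub hb hba
  · rw [abs_sub_comm, abs_of_nonneg (sub_nonneg.mpr (log_le_log (by linarith) hab)),
      abs_sub_comm, abs_of_nonneg (sub_nonneg.mpr hab)]
    exact log_sub_log_le_sub ha hab

lemma abs_posLog_sub_posLog_le {a b : ℝ} (ha : 0 ≤ a) (hb : 0 ≤ b) :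
    |log⁺ a - log⁺ b| ≤ |a - b| := by
  rw [posLog_eq_log_max_one ha, posLog_eq_log_max_one hb]
  exact (abs_log_sub_log_le_abs_sub (le_max_left _ _) (le_max_left _ _)).trans
    (by simpa only [max_comm _ (1 : ℝ)] using abs_max_sub_max_le_abs a b 1)

end Real

section SupportingFunction

variable {n : ℕ} {S : Set (Fin n → ℝ)}

lemma IsCompact.bddAbove_image_sum_mul (hS : IsCompact S) (ξ : Fin n → ℝ) :
    BddAbove ((fun x => ∑ i, x i * ξ i) '' S) :=
  (hS.image (continuous_finsetSum _ fun i _ => (continuous_apply i).mul continuous_const)).bddAbove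

lemma sum_mul_le_suppFn (hS : IsCompact S) {x : Fin n → ℝ} (hx : x ∈ S) (ξ : Fin n → ℝ) :
    ∑ i, x i * ξ i ≤ suppFn S ξ :=
  le_csSup (hS.bddAbove_image_sum_mul ξ) ⟨x, hx, rfl⟩

lemma suppFn_le (hne : S.Nonempty) {ξ : Fin n → ℝ} {c : ℝ}
    (h : ∀ x ∈ S, ∑ i, x i * ξ i ≤ c) : suppFn S ξ ≤ c :=
  csSup_le (hne.image _) (forall_mem_image.mpr h)

lemma suppFn_mono (hSsub : S ⊆ posOrthant n) (hS : IsCompact S) (hne : S.Nonempty)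
    {ξ η : Fin n → ℝ} (hξη : ξ ≤ η) : suppFn S ξ ≤ suppFn S η :=
  suppFn_le hne fun _ hx => (Finset.sum_le_sum fun i _ =>
    mul_le_mul_of_nonneg_left (hξη i) (hSsub hx i)).trans (sum_mul_le_suppFn hS hx η)

lemma suppFn_le_suppFn_add (hSsub : S ⊆ posOrthant n) (hS : IsCompact S) (hne : S.Nonempty)
    {ξ η : Fin n → ℝ} {c : ℝ} (hc : 0 ≤ c) (h : ∀ i, ξ i ≤ η i + c) :
    suppFn S ξ ≤ suppFn S η + c * sigmaS S :=
  suppFn_le hne fun x hx => calc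
    ∑ i, x i * ξ i ≤ ∑ i, (x i * η i + c * (x i * 1)) :=
      Finset.sum_le_sum fun i _ => by nlinarith [h i, hSsub hx i]
    _ = ∑ i, x i * η i + c * ∑ i, x i * 1 := by rw [Finset.sum_add_distrib, Finset.mul_sum]
    _ ≤ suppFn S η + c * sigmaS S :=
      add_le_add (sum_mul_le_suppFn hS hx η)
        (mul_le_mul_of_nonneg_left (sum_mul_le_suppFn hS hx 1) hc)

lemma IsLowerIn.suppFn_max_zero (hSlow : IsLowerIn S) (hSsub : S ⊆ posOrthant n)
    (hS : IsCompact S) (hne : S.Nonempty) (ξ : Fin n → ℝ) :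
    suppFn S (fun i => max 0 (ξ i)) = suppFn S ξ := by
  refine le_antisymm (suppFn_le hne fun x hx => ?_)
    (suppFn_mono hSsub hS hne fun i => le_max_right _ _)
  let y : Fin n → ℝ := fun i => if 0 ≤ ξ i then x i else 0
  have hy : y ∈ S := hSlow x hx y fun i => by
    by_cases h : 0 ≤ ξ i <;> simp [y, h, hSsub hx i]
  calc ∑ i, x i * max 0 (ξ i) = ∑ i, y i * ξ i := Finset.sum_congr rfl fun i _ => by
        by_cases h : 0 ≤ ξ i
        · simp [y, h]
        · simp [y, h, max_eq_left (le_of_not_ge h)]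
    _ ≤ suppFn S ξ := sum_mul_le_suppFn hS hy ξ

end SupportingFunction

lemma eucNorm_eq_norm_toLp {n : ℕ} (z : Fin n → ℂ) : eucNorm z = ‖WithLp.toLp 2 z‖ :=
  (EuclideanSpace.norm_eq _).symm

lemma dense_torusComp (n : ℕ) : Dense (torusComp n) := by
  have : torusComp n = Set.pi Set.univ fun _ => ({0}ᶜ : Set ℂ) := by ext; simp [torusComp]
  exact this ▸ dense_pi _ fun _ _ => dense_compl_singleton 0

section LogPlusSupport

variable {n : ℕ} {S : Set (Fin n → ℝ)}

lemma suppFn_posLog_le_add (hSsub : S ⊆ posOrthant n) (hS : IsCompact S) (hne : S.Nonempty)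
    (z w : Fin n → ℂ) :
    (suppFn S fun i => log⁺ ‖z i‖) ≤
      (suppFn S fun i => log⁺ ‖w i‖) + eucNorm (z - w) * sigmaS S := by
  refine suppFn_le_suppFn_add hSsub hS hne (by rw [eucNorm_eq_norm_toLp]; positivity) fun i => ?_
  have : log⁺ ‖z i‖ - log⁺ ‖w i‖ ≤ eucNorm (z - w) := calc
    _ ≤ |‖z i‖ - ‖w i‖| :=
      (le_abs_self _).trans (Real.abs_posLog_sub_posLog_le (norm_nonneg _) (norm_nonneg _))
    _ ≤ ‖z i - w i‖ := abs_norm_sub_norm_le _ _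
    _ ≤ eucNorm (z - w) := by
      rw [eucNorm_eq_norm_toLp]; exact PiLp.norm_apply_le (WithLp.toLp 2 (z - w)) i
  linarith

lemma abs_suppFn_posLog_sub_le (hSsub : S ⊆ posOrthant n) (hS : IsCompact S)
    (hne : S.Nonempty) (z w : Fin n → ℂ) :
    |(suppFn S fun i => log⁺ ‖z i‖) - suppFn S fun i => log⁺ ‖w i‖| ≤
      sigmaS S * eucNorm (z - w) := by
  have hzw := suppFn_posLog_le_add hSsub hS hne z w
  have hwz := suppFn_posLog_le_add hSsub hS hne w z
  rw [eucNorm_eq_norm_toLp, ← norm_neg, ← WithLp.toLp_neg, neg_sub,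
    ← eucNorm_eq_norm_toLp] at hwz
  rw [abs_sub_le_iff]
  constructor <;> linarith

lemma continuous_suppFn_posLog (hSsub : S ⊆ posOrthant n) (hS : IsCompact S)
    (hne : S.Nonempty) :
    Continuous fun z : Fin n → ℂ => suppFn S fun i => log⁺ ‖z i‖ := by
  have hLip : LipschitzWith (sigmaS S).toNNReal
      fun x : EuclideanSpace ℂ (Fin n) => suppFn S fun i => log⁺ ‖x i‖ :=
    LipschitzWith.of_dist_le' fun x y => by
      simpa [Real.dist_eq, dist_eq_norm, eucNorm_eq_norm_toLp] using
        abs_suppFn_posLog_sub_le hSsub hS hne x.ofLp y.ofLp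
  exact hLip.continuous.comp (PiLp.continuous_toLp 2 _)

end LogPlusSupport

lemma HS_eq_of_eqOn {n : ℕ} {S : Set (Fin n → ℝ)} {g : (Fin n → ℂ) → ℝ} (hg : Continuous g)
    (h : EqOn (fun z => suppFn S fun i => Real.log ‖z i‖) g (torusComp n)) (z : Fin n → ℂ) :
    HS S z = g z := by
  by_cases hz : z ∈ torusComp n
  · rw [HS, if_pos hz]
    exact h hz
  · rw [HS, if_neg hz]
    have : (𝓝[torusComp n] z).NeBot :=
      mem_closure_iff_nhdsWithin_neBot.mp ((dense_torusComp n).closure_eq ▸ mem_univ z)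
    rw [limsup_congr (eventually_nhdsWithin_of_forall h)]
    exact ((hg.tendsto z).mono_left nhdsWithin_le_nhds).limsup_eq

theorem statement10_general {n : ℕ} (S : Set (Fin n → ℝ))
    (hSsub : S ⊆ posOrthant n) (hScomp : IsCompact S)
    (hS0 : (0 : Fin n → ℝ) ∈ S) (hSlow : IsLowerIn S) :
    (∀ z w : Fin n → ℂ, |HS S z - HS S w| ≤ sigmaS S * eucNorm (z - w)) ∧
    (∀ z : Fin n → ℂ,
      HS S z = suppFn S fun i => max (Real.log (‖z i‖)) 0) := by
  have hne : S.Nonempty := ⟨0, hS0⟩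
  have hHS (z : Fin n → ℂ) : HS S z = suppFn S fun i => log⁺ ‖z i‖ :=
    HS_eq_of_eqOn (continuous_suppFn_posLog hSsub hScomp hne)
      (fun w _ => (hSlow.suppFn_max_zero hSsub hScomp hne _).symm) z
  refine ⟨fun z w => ?_, fun z => ?_⟩
  · rw [hHS, hHS]
    exact abs_suppFn_posLog_sub_le hSsub hScomp hne z w
  · simp_rw [hHS, Real.posLog_apply, max_comm]

/-- If `S ⊆ ℝⁿ₊` is a compact convex lower set with `0 ∈ S`, then `H_S` is
Lipschitz on `ℂⁿ` with constant `σ_S = φ_S(1,…,1)` (Euclidean norm), and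
`H_S(z) = φ_S(log⁺|z₁|,…,log⁺|zₙ|)` for all `z ∈ ℂⁿ`. -/
theorem statement10 {n : ℕ} (S : Set (Fin n → ℝ))
    (hSsub : S ⊆ posOrthant n) (hSconv : Convex ℝ S) (hScomp : IsCompact S)
    (hS0 : (0 : Fin n → ℝ) ∈ S) (hSlow : IsLowerIn S) :
    (∀ z w : Fin n → ℂ, |HS S z - HS S w| ≤ sigmaS S * eucNorm (z - w)) ∧
    (∀ z : Fin n → ℂ,
      HS S z = suppFn S fun i => max (Real.log (‖z i‖)) 0) :=
  statement10_general S hSsub hScomp hS0 hSlow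

end
end

section
/- Let S ⊂ ℝⁿ₊ be compact convex with 0 ∈ S, and suppose S is not a lower set. Then the class L^S₊(ℂⁿ) contains no uniformly continuous functions; that is, if u : ℂⁿ → ℝ is plurisubharmonic and there exist constants c₁, c₂ ∈ ℝ with H_S − c₁ ≤ u ≤ H_S + c₂ on ℂⁿ, then u is not uniformly continuous. In particular no such u is Hölder continuous. -/
open MeasureTheory Filter Topology Set Pointwise
open scoped ENNReal NNReal Classical

noncomputable section

/-!
Separating from `S` a point `y` of a box `[0, x]` with `x ∈ S` gives directions `ξ, ζ ∈ ℝⁿ` that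
agree except in coordinates where both are negative, with `φ_S(ζ) < φ_S(ξ)`. As `t → ∞` the points
`(e^{tξ_i})_i` and `(e^{tζ_i})_i` of `ℂ*ⁿ` merge, while `H_S`, being `t φ_S` there, differs on them
by `t (φ_S(ξ) - φ_S(ζ)) → ∞`. So nothing within bounded distance of `H_S` is uniformly continuous,
and Hölder continuity would imply uniform continuity.
-/

namespace LogSupportFn

variable {n : ℕ}

lemma bddAbove_image_dot {S : Set (Fin n → ℝ)} (hS : IsCompact S) (ξ : Fin n → ℝ) :
    BddAbove ((fun x => ∑ i, x i * ξ i) '' S) :=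
  (hS.image (continuous_finsetSum _ fun i _ => (continuous_apply i).mul continuous_const)).bddAbove

lemma suppFn_smul (S : Set (Fin n → ℝ)) {t : ℝ} (ht : 0 ≤ t) (ξ : Fin n → ℝ) :
    suppFn S (t • ξ) = t * suppFn S ξ := by
  have himage : (fun x => ∑ i, x i * (t • ξ) i) '' S = t • ((fun x => ∑ i, x i * ξ i) '' S) := by
    rw [← Set.image_smul, Set.image_image]
    refine Set.image_congr fun x _ => ?_
    simp only [Pi.smul_apply, smul_eq_mul, Finset.mul_sum]
    exact Finset.sum_congr rfl fun i _ => by ring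
  rw [suppFn, himage, Real.sSup_smul_of_nonneg ht, smul_eq_mul, suppFn]

lemma exists_suppFn_lt_of_not_isLowerIn {S : Set (Fin n → ℝ)}
    (hSconv : Convex ℝ S) (hScomp : IsCompact S) (hSnl : ¬ IsLowerIn S) :
    ∃ ξ ζ : Fin n → ℝ, (∀ i, ξ i = ζ i ∨ ξ i < 0 ∧ ζ i < 0) ∧ suppFn S ζ < suppFn S ξ := by
  simp only [IsLowerIn, not_forall, exists_prop] at hSnl
  obtain ⟨x, hx, y, hyx, hyS⟩ := hSnl
  obtain ⟨f, c, hfS, hfy⟩ := geometric_hahn_banach_closed_point hSconv hScomp.isClosed hyS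
  set η : Fin n → ℝ := fun i => f (Pi.single i 1)
  have hf : ∀ a, f a = ∑ i, a i * η i := fun a => by
    refine (f.toLinearMap.pi_apply_eq_sum_univ a).trans (Finset.sum_congr rfl fun i _ => ?_)
    have hsingle : (fun j => if i = j then (1 : ℝ) else 0) = Pi.single i 1 :=
      funext fun j => by simp [Pi.single_apply, eq_comm]
    simp [η, hsingle]
  -- Shrinking the negative part of `η` by `θ` keeps those coordinates negative, and for small `θ`
  -- the value at `x` stays above `c`, because `x ≥ y` where `η ≥ 0`.
  let ξ : ℝ → Fin n → ℝ := fun θ i => if η i < 0 then θ * η i else η i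
  have hcont : Continuous fun θ => ∑ i, x i * ξ θ i := by
    refine continuous_finsetSum _ fun i _ => continuous_const.mul ?_
    by_cases hi : η i < 0 <;> simp only [ξ, hi, if_true, if_false] <;> fun_prop
  have hx0 : c < ∑ i, x i * ξ 0 i := by
    refine (hf y ▸ hfy).trans_le (Finset.sum_le_sum fun i _ => ?_)
    obtain ⟨hy0, hyx⟩ := hyx i
    by_cases hi : η i < 0
    · simpa [ξ, hi] using mul_nonpos_of_nonneg_of_nonpos hy0 hi.le
    · simpa [ξ, hi] using mul_le_mul_of_nonneg_right hyx (not_lt.mp hi)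
  obtain ⟨θ, hθx, hθ⟩ :=
    ((hcont.tendsto 0).eventually (lt_mem_nhds hx0)).filter_mono nhdsWithin_le_nhds
      |>.and (self_mem_nhdsWithin : Set.Ioi (0 : ℝ) ∈ 𝓝[>] 0) |>.exists
  refine ⟨ξ θ, η, fun i => ?_, ?_⟩
  · by_cases hi : η i < 0
    · exact Or.inr ⟨by simpa [ξ, hi] using mul_neg_of_pos_of_neg hθ hi, hi⟩
    · simp [ξ, hi]
  · calc suppFn S η ≤ c := csSup_le ⟨_, x, hx, rfl⟩ (by
          rintro _ ⟨a, ha, rfl⟩; exact (hf a ▸ hfS a ha).le)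
      _ < ∑ i, x i * ξ θ i := hθx
      _ ≤ suppFn S (ξ θ) := le_csSup (bddAbove_image_dot hScomp _) ⟨x, hx, rfl⟩

def expPoint (ξ : Fin n → ℝ) : Fin n → ℂ := fun i => (Real.exp (ξ i) : ℂ)

lemma HS_expPoint (S : Set (Fin n → ℝ)) (ξ : Fin n → ℝ) : HS S (expPoint ξ) = suppFn S ξ := by
  have hmem : expPoint ξ ∈ torusComp n := fun i => by simp [expPoint]
  simp [HS, hmem, expPoint]

lemma continuous_eucNorm : Continuous (eucNorm : (Fin n → ℂ) → ℝ) := by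
  unfold eucNorm; fun_prop

lemma tendsto_eucNorm_expPoint_sub {ξ ζ : Fin n → ℝ} (h : ∀ i, ξ i = ζ i ∨ ξ i < 0 ∧ ζ i < 0) :
    Tendsto (fun t : ℝ => eucNorm (expPoint (t • ξ) - expPoint (t • ζ))) atTop (𝓝 0) := by
  have hexp : ∀ {a : ℝ}, a < 0 → Tendsto (fun t : ℝ => (Real.exp (t * a) : ℂ)) atTop (𝓝 0) :=
    fun ha => (Complex.continuous_ofReal.tendsto' 0 0 Complex.ofReal_zero).comp
      (Real.tendsto_exp_atBot.comp (tendsto_id.atTop_mul_const_of_neg ha))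
  have hcoord : Tendsto (fun t : ℝ => expPoint (t • ξ) - expPoint (t • ζ)) atTop (𝓝 0) := by
    refine tendsto_pi_nhds.mpr fun i => ?_
    simp only [expPoint, Pi.sub_apply, Pi.smul_apply, smul_eq_mul, Pi.zero_apply]
    rcases h i with hi | ⟨hξ, hζ⟩
    · simp [hi]
    · simpa using (hexp hξ).sub (hexp hζ)
  have hzero : eucNorm (0 : Fin n → ℂ) = 0 := by simp [eucNorm]
  exact (continuous_eucNorm.tendsto' 0 0 hzero).comp hcoord

theorem not_uniformContinuous_of_bounded_sub_HS {S : Set (Fin n → ℝ)}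
    (hSconv : Convex ℝ S) (hScomp : IsCompact S) (hSnl : ¬ IsLowerIn S)
    {u : (Fin n → ℂ) → ℝ} {c₁ c₂ : ℝ} (hlb : ∀ z, HS S z - c₁ ≤ u z)
    (hub : ∀ z, u z ≤ HS S z + c₂) :
    ¬ ∀ ε : ℝ, 0 < ε → ∃ d : ℝ, 0 < d ∧
        ∀ x y : Fin n → ℂ, eucNorm y < d → |u (x + y) - u x| < ε := by
  intro huc
  obtain ⟨d, hd, hud⟩ := huc 1 one_pos
  obtain ⟨ξ, ζ, hξζ, hlt⟩ := exists_suppFn_lt_of_not_isLowerIn hSconv hScomp hSnl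
  have hgrow : Tendsto (fun t : ℝ => t * (suppFn S ξ - suppFn S ζ)) atTop atTop :=
    tendsto_id.atTop_mul_const (sub_pos.mpr hlt)
  obtain ⟨t, hclose, hfar, ht⟩ := ((tendsto_eucNorm_expPoint_sub hξζ).eventually (gt_mem_nhds hd)
    |>.and ((hgrow.eventually_gt_atTop (1 + c₁ + c₂)).and (eventually_ge_atTop 0))).exists
  have hnear := hud (expPoint (t • ζ)) _ hclose
  rw [add_sub_cancel] at hnear
  have hξ := hlb (expPoint (t • ξ))
  have hζ := hub (expPoint (t • ζ))
  rw [HS_expPoint, suppFn_smul S ht] at hξ hζ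
  linarith [(abs_lt.mp hnear).2]

lemma uniformContinuous_of_holder {E : Type*} [AddCommGroup E] {N : E → ℝ} (hN : ∀ y, 0 ≤ N y)
    {f : E → ℝ} {α C : ℝ} (hα : 0 < α) (hf : ∀ x y, |f x - f y| ≤ C * N (x - y) ^ α) :
    ∀ ε : ℝ, 0 < ε → ∃ d : ℝ, 0 < d ∧ ∀ x y, N y < d → |f (x + y) - f x| < ε := by
  intro ε hε
  have hcont : Tendsto (fun r : ℝ => C * r ^ α) (𝓝 0) (𝓝 0) := by
    simpa [Real.zero_rpow hα.ne'] using
      ((Real.continuousAt_rpow_const 0 α (Or.inr hα.le)).tendsto).const_mul C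
  obtain ⟨d, hd, hsmall⟩ := Metric.eventually_nhds_iff.mp (hcont.eventually (gt_mem_nhds hε))
  refine ⟨d, hd, fun x y hy => ?_⟩
  have hxy := hf (x + y) x
  rw [add_sub_cancel_left] at hxy
  exact hxy.trans_lt (hsmall (by rwa [Real.dist_0_eq_abs, abs_of_nonneg (hN y)]))

end LogSupportFn

open LogSupportFn in
theorem statement12_general {n : ℕ} (S : Set (Fin n → ℝ))
    (hSconv : Convex ℝ S) (hScomp : IsCompact S)
    (hSnl : ¬ IsLowerIn S)
    (u : (Fin n → ℂ) → ℝ)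
    (c₁ c₂ : ℝ) (hlb : ∀ z, HS S z - c₁ ≤ u z) (hub : ∀ z, u z ≤ HS S z + c₂) :
    (¬ (∀ ε : ℝ, 0 < ε → ∃ d : ℝ, 0 < d ∧
        ∀ x y : Fin n → ℂ, eucNorm y < d → |u (x + y) - u x| < ε)) ∧
    (∀ α C : ℝ, 0 < α → α ≤ 1 →
      ¬ ∀ x y : Fin n → ℂ, |u x - u y| ≤ C * eucNorm (x - y) ^ α) := by
  have hnot := not_uniformContinuous_of_bounded_sub_HS hSconv hScomp hSnl hlb hub
  exact ⟨hnot, fun α C hα _ hholder =>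
    hnot (uniformContinuous_of_holder (fun _ => Real.sqrt_nonneg _) hα hholder)⟩

/-- If the compact convex set `0 ∈ S ⊆ ℝⁿ₊` is not a lower set, then the
class `L^S₊(ℂⁿ)` contains no uniformly continuous functions: any plurisubharmonic
`u : ℂⁿ → ℝ` with `H_S − c₁ ≤ u ≤ H_S + c₂` is not uniformly continuous; in particular no
such `u` is Hölder continuous. -/
theorem statement12 {n : ℕ} (S : Set (Fin n → ℝ))
    (hSsub : S ⊆ posOrthant n) (hSconv : Convex ℝ S) (hScomp : IsCompact S)
    (hS0 : (0 : Fin n → ℝ) ∈ S) (hSnl : ¬ IsLowerIn S)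
    (u : (Fin n → ℂ) → ℝ) (hupsh : PshOn Set.univ (fun z => ((u z : ℝ) : EReal)))
    (c₁ c₂ : ℝ) (hlb : ∀ z, HS S z - c₁ ≤ u z) (hub : ∀ z, u z ≤ HS S z + c₂) :
    (¬ (∀ ε : ℝ, 0 < ε → ∃ d : ℝ, 0 < d ∧
        ∀ x y : Fin n → ℂ, eucNorm y < d → |u (x + y) - u x| < ε)) ∧
    (∀ α C : ℝ, 0 < α → α ≤ 1 →
      ¬ ∀ x y : Fin n → ℂ, |u x - u y| ≤ C * eucNorm (x - y) ^ α) :=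
  statement12_general S hSconv hScomp hSnl u c₁ c₂ hlb hub

end
end
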